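/- Let f: {0,1}^d → [0,1] be monotone with I(f) ≤ K. For any integer d_0 ≥ 1 and δ > 0, set J := {i : I_i(f) ≥ δ} and 𝒮 := {S ⊆ J : |S| ≤ d_0}. Then ∑_{S ∉ 𝒮} f̂(S)² ≤ I^{(2)}(f)/(4 d_0) + K · 3^{d_0} · δ^{1/2} / 12. -/

import Mathlib

open Finset

/-- Expectation of `g` under the uniform measure on `{0,1}^d`. -/
noncomputable def unifE (d : ℕ) (g : (Fin d → Bool) → ℝ) : ℝ :=
  (∑ x : Fin d → Bool, g x) / 2 ^ d

/-- Discrete derivative `Δ_i f (x) = f(x^{i→1}) - f(x^{i→0})`. -/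
def disc (d : ℕ) (f : (Fin d → Bool) → ℝ) (i : Fin d) (x : Fin d → Bool) : ℝ :=
  f (Function.update x i true) - f (Function.update x i false)

def BMono (d : ℕ) (f : (Fin d → Bool) → ℝ) : Prop :=
  ∀ x y : Fin d → Bool, (∀ i, x i ≤ y i) → f x ≤ f y

/-- Fourier character `χ_S(x) = ∏_{i∈S} (2 x_i - 1)`. -/
def chi (d : ℕ) (S : Finset (Fin d)) (x : Fin d → Bool) : ℝ :=
  ∏ i ∈ S, (if x i then (1 : ℝ) else -1)

/-- Fourier coefficient `f̂(S) = E[f(X) χ_S(X)]`. -/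
noncomputable def fhat (d : ℕ) (f : (Fin d → Bool) → ℝ) (S : Finset (Fin d)) : ℝ :=
  unifE d (fun x => f x * chi d S x)

/-!
Split the Fourier weight outside `𝒮` into the part of degree `> d₀` and the part of degree
`≤ d₀` that meets some `i ∉ J`. Both are handled coordinate by coordinate through
`f̂(S ∪ {i}) = (Δ_i f)^(S) / 2` for `i ∉ S`. The high-degree part is at most
`d₀⁻¹ ∑_S |S| f̂(S)² = d₀⁻¹ ∑_i ∑_{S ∋ i} f̂(S)²`, and Bessel's inequality for `Δ_i f` bounds
the inner sums by `E[(Δ_i f)²] / 4`. In the low-degree part the weight of `Δ_i f` below degree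
`d₀` is at most `3^(d₀-1) ‖T_ρ Δ_i f‖₂²` with `ρ = 1/√3`; since `0 ≤ Δ_i f ≤ 1` by
monotonicity, Bonami's `(2,4)`-hypercontractivity and duality give
`‖T_ρ Δ_i f‖₂² ≤ I_i(f)^{3/2}`, which is at most `δ^{1/2} I_i(f)` for `i ∉ J`; summing over
`i` uses `I(f) ≤ K`.
-/

section Counting

lemma sum_filter_mem_eq {α M : Type*} [Fintype α] [DecidableEq α] [AddCommMonoid M] (a : α)
    (F : Finset α → M) : ∑ S with a ∈ S, F S = ∑ T with a ∉ T, F (insert a T) := by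
  refine (sum_nbij' (insert a) (erase · a) ?_ ?_ ?_ ?_ fun _ _ => rfl).symm <;> intro S hS <;>
    simp only [mem_filter, mem_univ, true_and] at hS
  · simp
  · simp
  · exact erase_insert hS
  · exact insert_erase hS

lemma sum_card_mul_eq {α M : Type*} [Fintype α] [DecidableEq α] [NonAssocSemiring M]
    (F : Finset α → M) : ∑ S, (#S : M) * F S = ∑ a, ∑ S with a ∈ S, F S := by
  simp only [sum_filter]
  rw [sum_comm]
  refine sum_congr rfl fun S _ => ?_
  rw [sum_ite_mem, univ_inter, sum_const, nsmul_eq_mul]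

lemma sum_filter_not_subset_le {α : Type*} [Fintype α] [DecidableEq α] {F : Finset α → ℝ}
    (hF : ∀ S, 0 ≤ F S) (J : Finset α) :
    ∑ S with ¬S ⊆ J, F S ≤ ∑ a with a ∉ J, ∑ S with a ∈ S, F S := by
  calc ∑ S with ¬S ⊆ J, F S
      ≤ ∑ S with ¬S ⊆ J, ∑ a with a ∉ J, if a ∈ S then F S else 0 := by
        refine sum_le_sum fun S hS => ?_
        obtain ⟨a, haS, haJ⟩ := not_subset.mp (mem_filter.mp hS).2
        refine le_of_eq_of_le (if_pos haS).symm
          (single_le_sum (f := fun a => if a ∈ S then F S else 0) (fun b _ => ?_) ?_)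
        · split_ifs <;> simp [hF S]
        · simpa using haJ
    _ ≤ ∑ S, ∑ a with a ∉ J, if a ∈ S then F S else 0 :=
        sum_le_sum_of_subset_of_nonneg (filter_subset _ _) fun S _ _ =>
          sum_nonneg fun a _ => by split_ifs <;> simp [hF S]
    _ = ∑ a with a ∉ J, ∑ S with a ∈ S, F S := by
        rw [sum_comm]
        simp only [sum_filter]

lemma sum_filter_not_and_eq {α : Type*} [Fintype α] [DecidableEq α] (F : Finset α → ℝ)
    (J : Finset α) (d0 : ℕ) :
    ∑ S with ¬(S ⊆ J ∧ #S ≤ d0), F S =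
      ∑ S with d0 < #S, F S + ∑ S with ¬S ⊆ J, (if #S ≤ d0 then F S else 0) := by
  simp only [sum_filter, ← sum_add_distrib]
  refine sum_congr rfl fun S _ => ?_
  by_cases hJ : S ⊆ J <;> by_cases hd : #S ≤ d0 <;> simp [hJ, hd]

end Counting

variable {d : ℕ}

section Expectation

lemma unifE_sum {ι : Type*} (s : Finset ι) (F : ι → (Fin d → Bool) → ℝ) :
    unifE d (fun x => ∑ i ∈ s, F i x) = ∑ i ∈ s, unifE d (F i) := by
  simp only [unifE, ← sum_div]
  rw [sum_comm]

lemma unifE_add (g h : (Fin d → Bool) → ℝ) :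
    unifE d (fun x => g x + h x) = unifE d g + unifE d h := by
  simp only [unifE, sum_add_distrib, add_div]

lemma unifE_sub (g h : (Fin d → Bool) → ℝ) :
    unifE d (fun x => g x - h x) = unifE d g - unifE d h := by
  simp only [unifE, sum_sub_distrib, sub_div]

lemma unifE_const_mul (c : ℝ) (g : (Fin d → Bool) → ℝ) :
    unifE d (fun x => c * g x) = c * unifE d g := by
  simp only [unifE, ← mul_sum, mul_div_assoc]

lemma unifE_const (c : ℝ) : unifE d (fun _ => c) = c := by
  simp [unifE]

lemma unifE_mono {g h : (Fin d → Bool) → ℝ} (hgh : ∀ x, g x ≤ h x) : unifE d g ≤ unifE d h :=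
  div_le_div_of_nonneg_right (sum_le_sum fun x _ => hgh x) (by positivity)

lemma unifE_nonneg {g : (Fin d → Bool) → ℝ} (hg : ∀ x, 0 ≤ g x) : 0 ≤ unifE d g :=
  div_nonneg (sum_nonneg fun x _ => hg x) (by positivity)

lemma unifE_mul_mul_sq_le {w : (Fin d → Bool) → ℝ} (hw : ∀ x, 0 ≤ w x)
    (u v : (Fin d → Bool) → ℝ) :
    unifE d (fun x => w x * u x * v x) ^ 2 ≤
      unifE d (fun x => w x * u x ^ 2) * unifE d (fun x => w x * v x ^ 2) := by
  simp only [unifE, div_pow, div_mul_div_comm, ← sq]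
  refine div_le_div_of_nonneg_right
    (sum_sq_le_sum_mul_sum_of_sq_le_mul _ ?_ ?_ ?_) (by positivity)
  · exact fun x _ => mul_nonneg (hw x) (sq_nonneg _)
  · exact fun x _ => mul_nonneg (hw x) (sq_nonneg _)
  · exact fun x _ => le_of_eq (by ring)

/-- Hölder's inequality with exponents `4/3` and `4`, combined with `g ^ (4/3) ≤ g`. -/
lemma unifE_mul_pow_four_le {g : (Fin d → Bool) → ℝ} (hg : ∀ x, g x ∈ Set.Icc (0 : ℝ) 1)
    (h : (Fin d → Bool) → ℝ) :
    unifE d (fun x => g x * h x) ^ 4 ≤ unifE d g ^ 3 * unifE d (fun x => h x ^ 4) := by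
  have hg0 x : 0 ≤ g x := (hg x).1
  have h₁ : unifE d (fun x => g x * h x) ^ 2 ≤
      unifE d g * unifE d (fun x => g x * h x ^ 2) := by
    simpa only [mul_one, one_pow] using unifE_mul_mul_sq_le hg0 (fun _ => 1) h
  have h₂ : unifE d (fun x => g x * h x ^ 2) ^ 2 ≤
      unifE d g * unifE d (fun x => g x * h x ^ 4) := by
    have := unifE_mul_mul_sq_le hg0 (fun _ => 1) (fun x => h x ^ 2)
    simp only [mul_one, one_pow] at this
    convert this using 4 with x
    ring
  have h₃ : unifE d (fun x => g x * h x ^ 4) ≤ unifE d (fun x => h x ^ 4) :=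
    unifE_mono fun x => mul_le_of_le_one_left (by positivity) (hg x).2
  have hE : 0 ≤ unifE d g := unifE_nonneg hg0
  calc unifE d (fun x => g x * h x) ^ 4
      = (unifE d (fun x => g x * h x) ^ 2) ^ 2 := by ring
    _ ≤ (unifE d g * unifE d (fun x => g x * h x ^ 2)) ^ 2 := by gcongr
    _ = unifE d g ^ 2 * unifE d (fun x => g x * h x ^ 2) ^ 2 := by ring
    _ ≤ unifE d g ^ 2 * (unifE d g * unifE d (fun x => h x ^ 4)) := by
        gcongr
        exact h₂.trans (mul_le_mul_of_nonneg_left h₃ hE)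
    _ = unifE d g ^ 3 * unifE d (fun x => h x ^ 4) := by ring

end Expectation

section Fourier

def spin (b : Bool) : ℝ := if b then 1 else -1

@[simp] lemma spin_true : spin true = 1 := rfl

@[simp] lemma spin_false : spin false = -1 := rfl

lemma chi_eq_prod_spin (S : Finset (Fin d)) (x : Fin d → Bool) :
    chi d S x = ∏ i ∈ S, spin (x i) := rfl

lemma chi_insert {S : Finset (Fin d)} {i : Fin d} (hi : i ∉ S) (x : Fin d → Bool) :
    chi d (insert i S) x = spin (x i) * chi d S x :=
  prod_insert hi

lemma sum_chi_mul_chi (S T : Finset (Fin d)) :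
    ∑ x : Fin d → Bool, chi d S x * chi d T x = if S = T then 2 ^ d else 0 := by
  have hfactor (i : Fin d) :
      ∑ b : Bool, (if i ∈ S then spin b else 1) * (if i ∈ T then spin b else 1) =
        if (i ∈ S ↔ i ∈ T) then 2 else 0 := by
    by_cases hS : i ∈ S <;> by_cases hT : i ∈ T <;> norm_num [hS, hT]
  have hchi (U : Finset (Fin d)) (x : Fin d → Bool) :
      chi d U x = ∏ i, if i ∈ U then spin (x i) else 1 := by
    rw [prod_ite_mem, univ_inter, chi_eq_prod_spin]
  simp only [hchi, ← prod_mul_distrib]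
  rw [← Fintype.prod_sum fun i b =>
      (if i ∈ S then spin b else 1) * (if i ∈ T then spin b else 1),
    prod_congr rfl fun i _ => hfactor i]
  split_ifs with hST
  · subst hST
    simp
  · obtain ⟨i, hi⟩ : ∃ i, ¬(i ∈ S ↔ i ∈ T) := by
      by_contra! h
      exact hST (Finset.ext h)
    exact prod_eq_zero (mem_univ i) (if_neg hi)

lemma unifE_chi_mul_chi (S T : Finset (Fin d)) :
    unifE d (fun x => chi d S x * chi d T x) = if S = T then 1 else 0 := by
  rw [unifE, sum_chi_mul_chi]
  split_ifs <;> simp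

lemma unifE_mul_sum_chi (g : (Fin d → Bool) → ℝ) (s : Finset (Finset (Fin d)))
    (c : Finset (Fin d) → ℝ) :
    unifE d (fun x => g x * ∑ S ∈ s, c S * chi d S x) = ∑ S ∈ s, c S * fhat d g S := by
  simp only [mul_sum]
  rw [unifE_sum]
  refine sum_congr rfl fun S _ => ?_
  rw [fhat, ← unifE_const_mul]
  congr 1
  ext x
  ring

lemma fhat_sum_chi (s : Finset (Finset (Fin d))) (c : Finset (Fin d) → ℝ)
    (T : Finset (Fin d)) :
    fhat d (fun x => ∑ S ∈ s, c S * chi d S x) T = if T ∈ s then c T else 0 := by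
  simp only [fhat, mul_comm _ (chi d T _), unifE_mul_sum_chi, fhat, unifE_chi_mul_chi,
    mul_ite, mul_one, mul_zero, sum_ite_eq]

lemma unifE_sum_chi_sq (s : Finset (Finset (Fin d))) (c : Finset (Fin d) → ℝ) :
    unifE d (fun x => (∑ S ∈ s, c S * chi d S x) ^ 2) = ∑ S ∈ s, c S ^ 2 := by
  simp only [sq, unifE_mul_sum_chi, fhat_sum_chi]
  exact sum_congr rfl fun S hS => by rw [if_pos hS]

lemma sum_fhat_sq_le (g : (Fin d → Bool) → ℝ) :
    ∑ S, fhat d g S ^ 2 ≤ unifE d (fun x => g x ^ 2) := by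
  set p : (Fin d → Bool) → ℝ := fun x => ∑ S, fhat d g S * chi d S x
  have hgp : unifE d (fun x => g x * p x) = ∑ S, fhat d g S ^ 2 := by
    simp only [p, unifE_mul_sum_chi, sq]
  have hp : unifE d (fun x => p x ^ 2) = ∑ S, fhat d g S ^ 2 := unifE_sum_chi_sq _ _
  have hexpand : unifE d (fun x => (g x - p x) ^ 2) =
      unifE d (fun x => g x ^ 2) - 2 * unifE d (fun x => g x * p x)
        + unifE d (fun x => p x ^ 2) := by
    rw [← unifE_const_mul, ← unifE_sub, ← unifE_add]
    congr 1
    ext x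
    ring
  have := unifE_nonneg (d := d) fun x => sq_nonneg (g x - p x)
  linarith

end Fourier

section Hypercontractivity

def flipAt (i : Fin d) (x : Fin d → Bool) : Fin d → Bool := Function.update x i (!x i)

lemma flipAt_involutive (i : Fin d) : Function.Involutive (flipAt i) := by
  intro x
  simp [flipAt]

lemma spin_flipAt (i : Fin d) (x : Fin d → Bool) : spin (flipAt i x i) = -spin (x i) := by
  cases h : x i <;> simp [flipAt, h]

lemma chi_flipAt_of_notMem {S : Finset (Fin d)} {i : Fin d} (hi : i ∉ S) (x : Fin d → Bool) :
    chi d S (flipAt i x) = chi d S x :=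
  prod_congr rfl fun j hj => by rw [flipAt, Function.update_of_ne (ne_of_mem_of_not_mem hj hi)]

lemma unifE_comp_flipAt (i : Fin d) (F : (Fin d → Bool) → ℝ) :
    unifE d (fun x => F (flipAt i x)) = unifE d F := by
  rw [unifE, unifE, (flipAt_involutive i).bijective.sum_comp]

lemma unifE_spin_mul_eq_zero {F : (Fin d → Bool) → ℝ} (i : Fin d)
    (hF : ∀ x, F (flipAt i x) = F x) : unifE d (fun x => spin (x i) * F x) = 0 := by
  have h := unifE_comp_flipAt i fun x => spin (x i) * F x
  simp only [spin_flipAt, hF] at h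
  rw [show (fun x => -spin (x i) * F x) = fun x => -1 * (spin (x i) * F x) by ext; ring,
    unifE_const_mul] at h
  linarith

/-- The odd powers of `spin (x i)` average out against functions that ignore coordinate `i`. -/
lemma unifE_add_spin_mul_pow_four {P Q : (Fin d → Bool) → ℝ} (i : Fin d)
    (hP : ∀ x, P (flipAt i x) = P x) (hQ : ∀ x, Q (flipAt i x) = Q x) :
    unifE d (fun x => (P x + spin (x i) * Q x) ^ 4) =
      unifE d (fun x => P x ^ 4) + 6 * unifE d (fun x => P x ^ 2 * Q x ^ 2)
        + unifE d (fun x => Q x ^ 4) := by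
  have hexpand (x : Fin d → Bool) : (P x + spin (x i) * Q x) ^ 4 =
      P x ^ 4 + 6 * (P x ^ 2 * Q x ^ 2) + Q x ^ 4
        + spin (x i) * (4 * P x ^ 3 * Q x + 4 * P x * Q x ^ 3) := by
    cases x i <;> simp <;> ring
  simp only [hexpand]
  rw [unifE_add, unifE_add, unifE_add, unifE_const_mul,
    unifE_spin_mul_eq_zero i fun x => by rw [hP, hQ], add_zero]

lemma sum_chi_comp_flipAt {J : Finset (Fin d)} {i : Fin d} (hi : i ∉ J)
    (b : Finset (Fin d) → ℝ) (x : Fin d → Bool) :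
    ∑ T ∈ J.powerset, b T * chi d T (flipAt i x) = ∑ T ∈ J.powerset, b T * chi d T x :=
  sum_congr rfl fun T hT => by
    rw [chi_flipAt_of_notMem fun h => hi (mem_powerset.mp hT h)]

/-- Bonami's `(2,4)`-hypercontractive inequality `‖T_ρ p‖₄ ≤ ‖p‖₂` for `ρ = 1/√3`, written for
the coefficients `a S = ρ ^ #S * p̂(S)`. -/
theorem unifE_sum_chi_pow_four_le (J : Finset (Fin d)) (a : Finset (Fin d) → ℝ) :
    unifE d (fun x => (∑ S ∈ J.powerset, a S * chi d S x) ^ 4) ≤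
      (∑ S ∈ J.powerset, 3 ^ #S * a S ^ 2) ^ 2 := by
  induction J using Finset.induction_on generalizing a with
  | empty =>
    simp only [powerset_empty, sum_singleton, chi, prod_empty, mul_one, card_empty, pow_zero,
      one_mul, unifE_const]
    exact le_of_eq (by ring)
  | insert i J hi ih =>
    set P := fun x => ∑ T ∈ J.powerset, a T * chi d T x
    set Q := fun x => ∑ T ∈ J.powerset, a (insert i T) * chi d T x
    set A := ∑ T ∈ J.powerset, 3 ^ #T * a T ^ 2
    set B := ∑ T ∈ J.powerset, 3 ^ #T * a (insert i T) ^ 2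
    have hnot : ∀ T ∈ J.powerset, i ∉ T := fun T hT h => hi (mem_powerset.mp hT h)
    have hsplit (x : Fin d → Bool) :
        ∑ S ∈ (insert i J).powerset, a S * chi d S x = P x + spin (x i) * Q x := by
      rw [sum_powerset_insert hi, mul_sum]
      congr 1
      exact sum_congr rfl fun T hT => by rw [chi_insert (hnot T hT)]; ring
    have hweights : ∑ S ∈ (insert i J).powerset, 3 ^ #S * a S ^ 2 = A + 3 * B := by
      rw [sum_powerset_insert hi, mul_sum]
      congr 1
      exact sum_congr rfl fun T hT => by rw [card_insert_of_notMem (hnot T hT)]; ring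
    have hA : unifE d (fun x => P x ^ 4) ≤ A ^ 2 := ih a
    have hB : unifE d (fun x => Q x ^ 4) ≤ B ^ 2 := ih fun T => a (insert i T)
    have hAB : 0 ≤ A * B :=
      mul_nonneg (sum_nonneg fun T _ => by positivity) (sum_nonneg fun T _ => by positivity)
    have hPQ : unifE d (fun x => P x ^ 2 * Q x ^ 2) ≤ A * B := by
      have hcs :=
        unifE_mul_mul_sq_le (fun _ => zero_le_one) (fun x => P x ^ 2) (fun x => Q x ^ 2)
      simp only [one_mul, ← pow_mul, Nat.reduceMul] at hcs
      refine le_of_pow_le_pow_left₀ two_ne_zero hAB (hcs.trans ?_)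
      rw [mul_pow]
      exact mul_le_mul hA hB (unifE_nonneg fun x => by positivity) (sq_nonneg A)
    simp only [hsplit]
    rw [unifE_add_spin_mul_pow_four i (sum_chi_comp_flipAt hi a)
      (sum_chi_comp_flipAt hi fun T => a (insert i T)), hweights]
    nlinarith [sq_nonneg B]

/-- The left side is `‖T_ρ g‖₂⁴` for `ρ = 1/√3`; the bound `E[g]³` comes from testing `g` against
`T_ρ (T_ρ g)` and applying Bonami's inequality to the latter. -/
theorem sum_fhat_sq_div_three_pow_sq_le {g : (Fin d → Bool) → ℝ}
    (hg : ∀ x, g x ∈ Set.Icc (0 : ℝ) 1) :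
    (∑ T, fhat d g T ^ 2 / 3 ^ #T) ^ 2 ≤ unifE d g ^ 3 := by
  set N := ∑ T, fhat d g T ^ 2 / 3 ^ #T
  set h := fun x => ∑ T, fhat d g T / 3 ^ #T * chi d T x
  have hgh : unifE d (fun x => g x * h x) = N := by
    rw [unifE_mul_sum_chi]
    exact sum_congr rfl fun T _ => by ring
  have hh : unifE d (fun x => h x ^ 4) ≤ N ^ 2 := by
    have := unifE_sum_chi_pow_four_le univ fun T => fhat d g T / 3 ^ #T
    rw [powerset_univ] at this
    convert this using 3 with T
    field_simp
  have hN : 0 ≤ N := sum_nonneg fun T _ => by positivity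
  have hE : 0 ≤ unifE d g := unifE_nonneg fun x => (hg x).1
  have key : N ^ 2 * N ^ 2 ≤ unifE d g ^ 3 * N ^ 2 := by
    calc N ^ 2 * N ^ 2 = unifE d (fun x => g x * h x) ^ 4 := by rw [hgh]; ring
      _ ≤ unifE d g ^ 3 * unifE d (fun x => h x ^ 4) := unifE_mul_pow_four_le hg h
      _ ≤ unifE d g ^ 3 * N ^ 2 := by gcongr
  rcases hN.eq_or_lt with hN0 | hNpos
  · rw [← hN0, zero_pow two_ne_zero]
    positivity
  · exact le_of_mul_le_mul_right key (by positivity)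

lemma sum_fhat_sq_div_three_pow_le_sqrt_mul {g : (Fin d → Bool) → ℝ}
    (hg : ∀ x, g x ∈ Set.Icc (0 : ℝ) 1) {δ : ℝ} (hδ : unifE d g ≤ δ) :
    ∑ T, fhat d g T ^ 2 / 3 ^ #T ≤ √δ * unifE d g := by
  have hE : 0 ≤ unifE d g := unifE_nonneg fun x => (hg x).1
  refine le_of_pow_le_pow_left₀ two_ne_zero (by positivity) ?_
  calc (∑ T, fhat d g T ^ 2 / 3 ^ #T) ^ 2
      ≤ unifE d g ^ 3 := sum_fhat_sq_div_three_pow_sq_le hg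
    _ = unifE d g * unifE d g ^ 2 := by ring
    _ ≤ δ * unifE d g ^ 2 := by gcongr
    _ = (√δ * unifE d g) ^ 2 := by rw [mul_pow, Real.sq_sqrt (hE.trans hδ)]

end Hypercontractivity

section Influence

lemma disc_eq_spin_mul (f : (Fin d → Bool) → ℝ) (i : Fin d) (x : Fin d → Bool) :
    disc d f i x = spin (x i) * (f x - f (flipAt i x)) := by
  have hx : Function.update x i (x i) = x := Function.update_eq_self i x
  cases h : x i <;> rw [h] at hx <;> simp [disc, flipAt, h, hx]

lemma fhat_insert {i : Fin d} {T : Finset (Fin d)} (hi : i ∉ T) (f : (Fin d → Bool) → ℝ) :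
    fhat d f (insert i T) = fhat d (disc d f i) T / 2 := by
  set G := fun x => f x * chi d (insert i T) x
  have hG (x : Fin d → Bool) : disc d f i x * chi d T x = G x + G (flipAt i x) := by
    simp only [G, disc_eq_spin_mul, chi_insert hi, spin_flipAt, chi_flipAt_of_notMem hi]
    ring
  rw [fhat, fhat]
  simp only [hG]
  rw [unifE_add, unifE_comp_flipAt]
  ring

lemma disc_mem_Icc {f : (Fin d → Bool) → ℝ} (hf : ∀ x, f x ∈ Set.Icc (0 : ℝ) 1)
    (hmono : BMono d f) (i : Fin d) (x : Fin d → Bool) : disc d f i x ∈ Set.Icc (0 : ℝ) 1 := by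
  have h₁ := (hf (Function.update x i true)).2
  have h₀ := (hf (Function.update x i false)).1
  refine ⟨sub_nonneg.mpr (hmono _ _ fun j => ?_), by rw [disc]; linarith⟩
  rcases eq_or_ne j i with rfl | hj
  · simp
  · simp [Function.update_of_ne hj]

lemma sum_mem_mul_fhat_sq_le (f : (Fin d → Bool) → ℝ) (i : Fin d) {w : ℕ → ℝ}
    (hw : ∀ k, 0 ≤ w k) :
    ∑ S with i ∈ S, w #S * fhat d f S ^ 2 ≤
      (∑ T, w (#T + 1) * fhat d (disc d f i) T ^ 2) / 4 := by
  rw [sum_filter_mem_eq, sum_div]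
  calc ∑ T with i ∉ T, w #(insert i T) * fhat d f (insert i T) ^ 2
      = ∑ T with i ∉ T, w (#T + 1) * fhat d (disc d f i) T ^ 2 / 4 :=
        sum_congr rfl fun T hT => by
          have hiT : i ∉ T := (mem_filter.mp hT).2
          rw [card_insert_of_notMem hiT, fhat_insert hiT]
          ring
    _ ≤ ∑ T, w (#T + 1) * fhat d (disc d f i) T ^ 2 / 4 :=
        sum_le_sum_of_subset_of_nonneg (filter_subset _ _) fun T _ _ => by
          have := hw (#T + 1)
          positivity

theorem sum_card_gt_fhat_sq_le (f : (Fin d → Bool) → ℝ) {d0 : ℕ} (hd0 : 0 < d0) :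
    ∑ S with d0 < #S, fhat d f S ^ 2 ≤
      (∑ i, unifE d (fun x => disc d f i x ^ 2)) / (4 * d0) := by
  have hd0' : (0 : ℝ) < d0 := by exact_mod_cast hd0
  have hinf (i : Fin d) :
      ∑ S with i ∈ S, fhat d f S ^ 2 ≤ unifE d (fun x => disc d f i x ^ 2) / 4 := by
    have h := sum_mem_mul_fhat_sq_le f i (w := fun _ => 1) fun _ => zero_le_one
    simp only [one_mul] at h
    exact h.trans (by gcongr; exact sum_fhat_sq_le _)
  calc ∑ S with d0 < #S, fhat d f S ^ 2
      ≤ ∑ S, (#S : ℝ) * fhat d f S ^ 2 / d0 := by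
        rw [sum_filter]
        refine sum_le_sum fun S _ => ?_
        split_ifs with hS
        · rw [le_div_iff₀ hd0', mul_comm]
          gcongr
        · positivity
    _ = (∑ i, ∑ S with i ∈ S, fhat d f S ^ 2) / d0 := by rw [← sum_div, sum_card_mul_eq]
    _ ≤ (∑ i, unifE d (fun x => disc d f i x ^ 2) / 4) / d0 := by gcongr with i; exact hinf i
    _ = (∑ i, unifE d (fun x => disc d f i x ^ 2)) / (4 * d0) := by rw [← sum_div, div_div]

end Influence

section SpectralConcentration

lemma sum_mem_card_le_fhat_sq_le (f : (Fin d → Bool) → ℝ) (i : Fin d) (d0 : ℕ) :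
    ∑ S with i ∈ S, (if #S ≤ d0 then fhat d f S ^ 2 else 0) ≤
      3 ^ d0 / 12 * ∑ T, fhat d (disc d f i) T ^ 2 / 3 ^ #T := by
  have hw (k : ℕ) : 0 ≤ if k ≤ d0 then (1 : ℝ) else 0 := by split_ifs <;> norm_num
  have h := sum_mem_mul_fhat_sq_le f i hw
  simp only [boole_mul] at h
  refine h.trans ?_
  rw [mul_sum, sum_div]
  refine sum_le_sum fun T _ => ?_
  split_ifs with hT
  · calc fhat d (disc d f i) T ^ 2 / 4
        = 3 ^ (#T + 1) / 12 * (fhat d (disc d f i) T ^ 2 / 3 ^ #T) := by field_simp; ring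
      _ ≤ 3 ^ d0 / 12 * (fhat d (disc d f i) T ^ 2 / 3 ^ #T) := by gcongr; norm_num
  · rw [zero_div]
    positivity

theorem sum_low_degree_not_subset_fhat_sq_le {f : (Fin d → Bool) → ℝ}
    (hf : ∀ x, f x ∈ Set.Icc (0 : ℝ) 1) (hmono : BMono d f) {K : ℝ}
    (hI : ∑ i, unifE d (fun x => disc d f i x) ≤ K) (δ : ℝ) (d0 : ℕ) :
    ∑ S with ¬S ⊆ univ.filter (fun i => δ ≤ unifE d (fun x => disc d f i x)),
        (if #S ≤ d0 then fhat d f S ^ 2 else 0) ≤ K * 3 ^ d0 * √δ / 12 := by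
  set J := univ.filter fun i => δ ≤ unifE d (fun x => disc d f i x)
  have hI0 (i : Fin d) : 0 ≤ unifE d (fun x => disc d f i x) :=
    unifE_nonneg fun x => (disc_mem_Icc hf hmono i x).1
  calc ∑ S with ¬S ⊆ J, (if #S ≤ d0 then fhat d f S ^ 2 else 0)
      ≤ ∑ i with i ∉ J, ∑ S with i ∈ S, (if #S ≤ d0 then fhat d f S ^ 2 else 0) :=
        sum_filter_not_subset_le (fun S => by split_ifs <;> positivity) J
    _ ≤ ∑ i with i ∉ J, 3 ^ d0 / 12 * (√δ * unifE d (fun x => disc d f i x)) := by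
        refine sum_le_sum fun i hi => (sum_mem_card_le_fhat_sq_le f i d0).trans ?_
        have hiJ : ¬δ ≤ unifE d (fun x => disc d f i x) := by simpa [J] using hi
        have hiδ : unifE d (fun x => disc d f i x) ≤ δ := (not_le.mp hiJ).le
        gcongr
        exact sum_fhat_sq_div_three_pow_le_sqrt_mul (disc_mem_Icc hf hmono i) hiδ
    _ = 3 ^ d0 / 12 * √δ * ∑ i with i ∉ J, unifE d (fun x => disc d f i x) := by
        rw [mul_sum]
        exact sum_congr rfl fun i _ => by ring
    _ ≤ 3 ^ d0 / 12 * √δ * K := by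
        gcongr
        exact (sum_le_sum_of_subset_of_nonneg (filter_subset _ _) fun i _ _ => hI0 i).trans hI
    _ = K * 3 ^ d0 * √δ / 12 := by ring

end SpectralConcentration

theorem stmt12_general (d : ℕ) (f : (Fin d → Bool) → ℝ) (K δ : ℝ) (d0 : ℕ)
    (hf : ∀ x, f x ∈ Set.Icc (0 : ℝ) 1) (hmono : BMono d f)
    (hI : (∑ i : Fin d, unifE d (fun x => disc d f i x)) ≤ K)
    (hd0 : 1 ≤ d0) :
    (∑ S ∈ Finset.univ.filter (fun S : Finset (Fin d) =>
        ¬(S ⊆ Finset.univ.filter (fun i : Fin d => δ ≤ unifE d (fun x => disc d f i x)) ∧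
          S.card ≤ d0)), (fhat d f S) ^ 2) ≤
      (∑ i : Fin d, unifE d (fun x => (disc d f i x) ^ 2)) / (4 * d0)
        + K * 3 ^ d0 * Real.sqrt δ / 12 := by
  rw [sum_filter_not_and_eq]
  exact add_le_add (sum_card_gt_fhat_sq_le f hd0)
    (sum_low_degree_not_subset_fhat_sq_le hf hmono hI δ d0)

theorem stmt12 (d : ℕ) (f : (Fin d → Bool) → ℝ) (K δ : ℝ) (d0 : ℕ)
    (hf : ∀ x, f x ∈ Set.Icc (0 : ℝ) 1) (hmono : BMono d f)
    (hI : (∑ i : Fin d, unifE d (fun x => disc d f i x)) ≤ K)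
    (hd0 : 1 ≤ d0) (hδ : 0 < δ) :
    (∑ S ∈ Finset.univ.filter (fun S : Finset (Fin d) =>
        ¬(S ⊆ Finset.univ.filter (fun i : Fin d => δ ≤ unifE d (fun x => disc d f i x)) ∧
          S.card ≤ d0)), (fhat d f S) ^ 2) ≤
      (∑ i : Fin d, unifE d (fun x => (disc d f i x) ^ 2)) / (4 * d0)
        + K * 3 ^ d0 * Real.sqrt δ / 12 :=
  stmt12_general d f K δ d0 hf hmono hI hd0
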